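/- Every action of a countable group G on a finite set X is sofic. -/

import Mathlib

/-!
`G` acts through `α` on the finite group `Sym(X)` by left multiplication. Identifying `Sym(X)`
with `Fin n` turns this into a genuine homomorphism `G → Sym(Fin n)`, so it is exactly unital and
multiplicative, and the maps `π_s x := s⁻¹ x` are injective and intertwine the two actions at
every point `s`, so `S` may be taken to be everything.
-/

open scoped Classical Pointwise

noncomputable def hDist {A : Type*} [Fintype A] (σ τ : Equiv.Perm A) : ℝ :=
  ((Finset.univ.filter fun a => σ a ≠ τ a).card : ℝ) / (Fintype.card A : ℝ)

/-- `φ : G → Sym(Fin n)` is an `(F, E, ε)`-orbit approximation of the action `α : G ↷ X`. -/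
def IsOrbitApprox {G X : Type*} [Group G] {n : ℕ} (α : G →* Equiv.Perm X)
    (F : Finset G) (E : Finset X) (ε : ℝ) (φ : G → Equiv.Perm (Fin n)) : Prop :=
  ∃ (m : ℕ) (S : Finset (Fin n)) (π : Fin n → X → Fin m),
    ((S.card : ℝ) > (1 - ε) * (n : ℝ)) ∧
    (∀ s ∈ S, Set.InjOn (π s) (E : Set X)) ∧
    (∀ s ∈ S, ∀ g ∈ F, ∀ x ∈ E, φ g s ∈ S → α g⁻¹ x ∈ E →
      π (φ g s) x = π s (α g⁻¹ x))

/-- Soficity of an action `α : G ↷ X` given as a homomorphism `G →* Sym(X)`. -/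
def SoficAction {G X : Type*} [Group G] (α : G →* Equiv.Perm X) : Prop :=
  ∀ (F : Finset G) (E : Finset X) (ε : ℝ), 0 < ε →
    ∃ (n : ℕ) (φ : G → Equiv.Perm (Fin n)),
      φ 1 = 1 ∧
      (∀ g ∈ F, ∀ h ∈ F, hDist (φ (g * h)) (φ g * φ h) < ε) ∧
      IsOrbitApprox α F E ε φ

/-- Soficity of a group. -/
def SoficGroup (G : Type*) [Group G] : Prop :=
  ∀ (F : Finset G) (ε : ℝ), 0 < ε →
    ∃ (n : ℕ) (φ : G → Equiv.Perm (Fin n)),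
      φ 1 = 1 ∧
      (∀ g ∈ F, ∀ h ∈ F, hDist (φ (g * h)) (φ g * φ h) < ε) ∧
      (∀ g ∈ F, g ≠ 1 → hDist 1 (φ g) > 1 - ε)

lemma hDist_self {A : Type*} [Fintype A] (σ : Equiv.Perm A) : hDist σ σ = 0 := by
  simp [hDist]

lemma isOrbitApprox_of_equivariant {G X : Type*} [Group G] {n m : ℕ} (α : G →* Equiv.Perm X)
    (F : Finset G) (E : Finset X) {ε : ℝ} (hε : 0 < ε) (hn : 0 < n)
    (φ : G → Equiv.Perm (Fin n)) (π : Fin n → X → Fin m) (hπ : ∀ s, Function.Injective (π s))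
    (hφπ : ∀ g s x, π (φ g s) x = π s (α g⁻¹ x)) :
    IsOrbitApprox α F E ε φ := by
  refine ⟨m, Finset.univ, π, ?_, fun s _ => (hπ s).injOn, fun s _ g _ x _ _ _ => hφπ g s x⟩
  have hn' : (0 : ℝ) < n := by exact_mod_cast hn
  rw [Finset.card_univ, Fintype.card_fin]
  nlinarith

lemma SoficAction.of_equivariant {G X : Type*} [Group G] {n m : ℕ} (α : G →* Equiv.Perm X)
    (hn : 0 < n) (ρ : G →* Equiv.Perm (Fin n)) (π : Fin n → X → Fin m)
    (hπ : ∀ s, Function.Injective (π s)) (hρπ : ∀ g s x, π (ρ g s) x = π s (α g⁻¹ x)) :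
    SoficAction α := by
  intro F E ε hε
  refine ⟨n, ρ, map_one ρ, fun g _ h _ => ?_,
    isOrbitApprox_of_equivariant α F E hε hn ρ π hπ hρπ⟩
  rw [map_mul, hDist_self]
  exact hε

theorem stmt_10_general {G X : Type*} [Group G] [Finite X]
    (α : G →* Equiv.Perm X) :
    SoficAction α := by
  have : Fintype X := Fintype.ofFinite X
  let e := Fintype.equivFin (Equiv.Perm X)
  let eX := Fintype.equivFin X
  let ρ : G →* Equiv.Perm (Fin (Fintype.card (Equiv.Perm X))) :=
    e.permCongrHom.toMonoidHom.comp ((MulAction.toPermHom (Equiv.Perm X) (Equiv.Perm X)).comp α)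
  refine SoficAction.of_equivariant α Fintype.card_pos ρ
    (fun s x => eX ((e.symm s)⁻¹ x)) (fun s => eX.injective.comp (e.symm s)⁻¹.injective) ?_
  intro g s x
  simp [ρ, Equiv.permCongrHom, Equiv.permCongr_apply, Equiv.Perm.mul_apply]

theorem stmt_10 {G X : Type*} [Group G] [Countable G] [Finite X]
    (α : G →* Equiv.Perm X) :
    SoficAction α :=
  stmt_10_general α
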